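/- On a path L^n with window size λ, let S be a target set whose smallest element is i and second-smallest is j, with D[i] = min{x > i : t(x)=2} ∉ S. If j > 2·D[i] − i + λ − 1, then S is not a TWC target set: node D[i] is never influenced, because its two neighbors are never simultaneously active. -/

import Mathlib

set_option linter.unusedVariables false

open Finset

variable {V : Type*} [Fintype V] [DecidableEq V]

/-- `influenced G t lam S r` : set of influenced nodes after round `r`. -/
def influenced (G : SimpleGraph V) [DecidableRel G.Adj] (t : V → ℕ) (lam : ℕ)
    (S : Finset V) : ℕ → Finset V
  | 0 => S
  | r + 1 =>
    let prev := influenced G t lam S r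
    let A := if r + 1 ≤ lam then prev else prev \ influenced G t lam S (r - lam)
    prev ∪ Finset.univ.filter fun v => t v ≤ (G.neighborFinset v ∩ A).card
  termination_by r => r
  decreasing_by all_goals omega

/-- `activeSet G t lam S r` : set of active nodes at round `r`. -/
def activeSet (G : SimpleGraph V) [DecidableRel G.Adj] (t : V → ℕ) (lam : ℕ)
    (S : Finset V) (r : ℕ) : Finset V :=
  if r = 0 then ∅
  else if r ≤ lam then influenced G t lam S (r - 1)
  else influenced G t lam S (r - 1) \ influenced G t lam S (r - 1 - lam)

def isTargetSet (G : SimpleGraph V) [DecidableRel G.Adj] (t : V → ℕ) (lam : ℕ)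
    (S : Finset V) : Prop :=
  ∃ r, influenced G t lam S r = Finset.univ

def pathGraph (n : ℕ) : SimpleGraph (Fin n) where
  Adj i j := i.val + 1 = j.val ∨ j.val + 1 = i.val
  symm := ⟨fun i j h => h.symm⟩
  loopless := ⟨fun i h => by rcases h with h | h <;> omega⟩

instance (n : ℕ) : DecidableRel (pathGraph n).Adj :=
  fun i j => inferInstanceAs (Decidable (i.val + 1 = j.val ∨ j.val + 1 = i.val))

def ringGraph (n : ℕ) : SimpleGraph (Fin n) where
  Adj i j := i ≠ j ∧ ((i.val + 1) % n = j.val ∨ (j.val + 1) % n = i.val)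
  symm := ⟨fun i j h => ⟨h.1.symm, h.2.symm⟩⟩
  loopless := ⟨fun i h => h.1 rfl⟩

instance (n : ℕ) : DecidableRel (ringGraph n).Adj :=
  fun i j => inferInstanceAs (Decidable (_ ∧ (_ ∨ _)))

instance : DecidableRel (⊤ : SimpleGraph V).Adj :=
  fun a b => inferInstanceAs (Decidable (a ≠ b))

/-!
On the path, influence travels at most one vertex per round, so by round `r` every influenced
vertex right of `i` lies within distance `r` of `i` or of `j`. Thresholds are `1` strictly between
`i` and `d`, so the wave from `i` reaches `d - 1` at round `d - 1 - i` and leaves the active window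
`λ` rounds later. The wave from `j` can reach `d + 1` only at round `j - d - 1`, which the
hypothesis `j > 2d - i + λ - 1` places after that window. As `d` needs both neighbours active in
the same round, it is never influenced, and the vertices beyond it are reached only by the wave
from `j`.
-/

section Diffusion

variable {G : SimpleGraph V} [DecidableRel G.Adj] {t : V → ℕ} {lam : ℕ} {S : Finset V}

lemma influenced_succ (r : ℕ) :
    influenced G t lam S (r + 1) = influenced G t lam S r ∪
      univ.filter fun v => t v ≤ (G.neighborFinset v ∩ activeSet G t lam S (r + 1)).card := by
  rw [influenced, activeSet, if_neg r.succ_ne_zero, Nat.add_sub_cancel]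

lemma influenced_mono : Monotone (influenced G t lam S) :=
  monotone_nat_of_le_succ fun r => by rw [influenced_succ]; exact subset_union_left

lemma mem_activeSet_succ {r : ℕ} {v : V} :
    v ∈ activeSet G t lam S (r + 1) ↔
      v ∈ influenced G t lam S r ∧ (lam ≤ r → v ∉ influenced G t lam S (r - lam)) := by
  unfold activeSet
  rw [if_neg r.succ_ne_zero, Nat.add_sub_cancel]
  split_ifs with h
  · exact ⟨fun hv => ⟨hv, fun h' => absurd h (by omega)⟩, And.left⟩
  · rw [mem_sdiff]
    exact ⟨fun hv => ⟨hv.1, fun _ => hv.2⟩, fun hv => ⟨hv.1, hv.2 (by omega)⟩⟩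

lemma activeSet_succ_subset (r : ℕ) :
    activeSet G t lam S (r + 1) ⊆ influenced G t lam S r :=
  fun _ hv => (mem_activeSet_succ.mp hv).1

lemma mem_influenced_succ_of_adj {r : ℕ} {v u : V} (ht : t v ≤ 1) (hadj : G.Adj v u)
    (hu : u ∈ activeSet G t lam S (r + 1)) : v ∈ influenced G t lam S (r + 1) := by
  rw [influenced_succ]
  refine mem_union_right _ (mem_filter.mpr ⟨mem_univ v, ht.trans ?_⟩)
  exact card_pos.mpr ⟨u, mem_inter.mpr ⟨(G.mem_neighborFinset v u).mpr hadj, hu⟩⟩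

lemma le_card_activeSet_of_mem_influenced_succ {r : ℕ} {v : V}
    (hv : v ∈ influenced G t lam S (r + 1)) (hv' : v ∉ influenced G t lam S r) :
    t v ≤ (G.neighborFinset v ∩ activeSet G t lam S (r + 1)).card := by
  rw [influenced_succ] at hv
  exact (mem_filter.mp ((mem_union.mp hv).resolve_left hv')).2

lemma exists_adj_mem_activeSet_of_mem_influenced_succ {r : ℕ} {v : V} (ht : 0 < t v)
    (hv : v ∈ influenced G t lam S (r + 1)) (hv' : v ∉ influenced G t lam S r) :
    ∃ u, G.Adj v u ∧ u ∈ activeSet G t lam S (r + 1) := by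
  obtain ⟨u, hu⟩ := card_pos.mp (ht.trans_le (le_card_activeSet_of_mem_influenced_succ hv hv'))
  obtain ⟨huN, huA⟩ := mem_inter.mp hu
  exact ⟨u, (G.mem_neighborFinset v u).mp huN, huA⟩

end Diffusion

section Path

variable {n lam : ℕ} {t : Fin n → ℕ} {S : Finset (Fin n)}

lemma pathGraph_adj_iff {u v : Fin n} :
    (pathGraph n).Adj u v ↔ (u : ℕ) + 1 = v ∨ (v : ℕ) + 1 = u :=
  Iff.rfl

lemma exists_pred_succ_mem_activeSet_of_mem_influenced_succ {r : ℕ} {v : Fin n} (ht : 2 ≤ t v)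
    (hv : v ∈ influenced (pathGraph n) t lam S (r + 1))
    (hv' : v ∉ influenced (pathGraph n) t lam S r) :
    ∃ u w : Fin n, (u : ℕ) + 1 = v ∧ (w : ℕ) = v + 1 ∧
      u ∈ activeSet (pathGraph n) t lam S (r + 1) ∧ w ∈ activeSet (pathGraph n) t lam S (r + 1) := by
  obtain ⟨a, ha, b, hb, hab⟩ :=
    one_lt_card.mp (ht.trans (le_card_activeSet_of_mem_influenced_succ hv hv'))
  obtain ⟨haN, haA⟩ := mem_inter.mp ha
  obtain ⟨hbN, hbA⟩ := mem_inter.mp hb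
  rw [SimpleGraph.mem_neighborFinset, pathGraph_adj_iff] at haN hbN
  rcases haN with ha | ha <;> rcases hbN with hb | hb
  · exact absurd (by omega) hab
  · exact ⟨b, a, hb, ha.symm, hbA, haA⟩
  · exact ⟨a, b, ha, hb.symm, haA, hbA⟩
  · exact absurd (by omega) hab

variable {i j : Fin n}

lemma le_add_or_le_add_of_mem_influenced_pathGraph (ht : ∀ v, 0 < t v)
    (hS : ∀ x ∈ S, i < x → j ≤ x) (r : ℕ) {v : Fin n}
    (hv : v ∈ influenced (pathGraph n) t lam S r) (hiv : i < v) :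
    (v : ℕ) ≤ i + r ∨ (j : ℕ) ≤ v + r := by
  induction r generalizing v with
  | zero =>
    rw [influenced] at hv
    exact Or.inr (hS v hv hiv)
  | succ r ih =>
    by_cases hvr : v ∈ influenced (pathGraph n) t lam S r
    · have := ih hvr hiv
      omega
    obtain ⟨u, hadj, hu⟩ := exists_adj_mem_activeSet_of_mem_influenced_succ (ht v) hv hvr
    have hu := activeSet_succ_subset r hu
    rw [pathGraph_adj_iff] at hadj
    by_cases hiu : i < u
    · have := ih hu hiu
      omega
    · omega

variable {d : Fin n}

lemma mem_influenced_pathGraph_of_le_add (ht : ∀ v, 0 < t v) (hlam : 1 ≤ lam)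
    (hiS : i ∈ S) (hS : ∀ x ∈ S, i < x → j ≤ x) (hbetween : ∀ x, i < x → x < d → t x ≤ 1)
    (hdj : 2 * (d : ℕ) ≤ j + i) (r : ℕ) {v : Fin n} (hiv : i ≤ v) (hvd : v < d)
    (hvr : (v : ℕ) ≤ i + r) : v ∈ influenced (pathGraph n) t lam S r := by
  induction r generalizing v with
  | zero =>
    rw [influenced, show v = i by omega]
    exact hiS
  | succ r ih =>
    by_cases hv : (v : ℕ) ≤ i + r
    · exact influenced_mono r.le_succ (ih hiv hvd hv)
    obtain ⟨u, hu_val⟩ : ∃ u : Fin n, (u : ℕ) = i + r := ⟨⟨i + r, by omega⟩, rfl⟩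
    have hu : u ∈ activeSet (pathGraph n) t lam S (r + 1) := by
      refine mem_activeSet_succ.mpr ⟨ih (by omega) (by omega) hu_val.le, fun hlr hu => ?_⟩
      have hiu : i < u := by omega
      have := le_add_or_le_add_of_mem_influenced_pathGraph ht hS (r - lam) hu hiu
      omega
    exact mem_influenced_succ_of_adj (hbetween v (by omega) hvd)
      (pathGraph_adj_iff.mpr (by omega)) hu

lemma lt_and_le_add_of_mem_influenced_pathGraph (ht : ∀ v, 0 < t v) (hlam : 1 ≤ lam)
    (hiS : i ∈ S) (hS : ∀ x ∈ S, i < x → j ≤ x) (hbetween : ∀ x, i < x → x < d → t x ≤ 1)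
    (hid : i < d) (htd : 2 ≤ t d) (hdS : d ∉ S) (hlower : 2 * (d : ℕ) + lam < j + i + 1)
    (r : ℕ) {v : Fin n} (hv : v ∈ influenced (pathGraph n) t lam S r) (hdv : d ≤ v) :
    d < v ∧ (j : ℕ) ≤ v + r := by
  induction r generalizing v with
  | zero =>
    rw [influenced] at hv
    have hdv : d < v := lt_of_le_of_ne hdv (by rintro rfl; exact hdS hv)
    exact ⟨hdv, hS v hv (hid.trans hdv)⟩
  | succ r ih =>
    by_cases hvr : v ∈ influenced (pathGraph n) t lam S r
    · have := ih hvr hdv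
      omega
    rcases hdv.lt_or_eq with hdv | rfl
    · obtain ⟨u, hadj, hu⟩ := exists_adj_mem_activeSet_of_mem_influenced_succ (ht v) hv hvr
      have := ih (activeSet_succ_subset r hu) (by rw [pathGraph_adj_iff] at hadj; omega)
      rw [pathGraph_adj_iff] at hadj
      omega
    · obtain ⟨u, w, hu_val, hw_val, hu, hw⟩ :=
        exists_pred_succ_mem_activeSet_of_mem_influenced_succ htd hv hvr
      have hjw := (ih (activeSet_succ_subset r hw) (by omega)).2
      -- `d + 1` is reached so late that `d - 1` has already left the active window.
      refine absurd ?_ ((mem_activeSet_succ.mp hu).2 (by omega))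
      exact mem_influenced_pathGraph_of_le_add ht hlam hiS hS hbetween (by omega) (r - lam)
        (by omega) (by omega) (by omega)

end Path

/-- on a path with `t(0)=t(n-1)=2`, if `S` has smallest element `i`
and second-smallest element `j`, `d = D[i] ∉ S`, and `j > 2·D[i] − i + λ − 1`
(i.e. `2d + λ < j + i + 1`), then `d` is never influenced (its two neighbors are
never simultaneously active), so `S` is not a TWC target set. -/
theorem stmt9 (n lam : ℕ) (hlam : 1 ≤ lam) (t : Fin n → ℕ)
    (htv : ∀ v, t v = 1 ∨ t v = 2)
    (S : Finset (Fin n)) (i j d : Fin n)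
    (hiS : i ∈ S)
    (hjsec : ∀ x ∈ S, i < x → j ≤ x)
    (hid : i < d) (htd : t d = 2)
    (hbetween : ∀ x : Fin n, i < x → x < d → t x = 1) (hdS : d ∉ S)
    (hlower : 2 * (d : ℕ) + lam < (j : ℕ) + (i : ℕ) + 1) :
    (∀ r : ℕ, d ∉ influenced (pathGraph n) t lam S r) ∧
    ¬ isTargetSet (pathGraph n) t lam S := by
  have ht : ∀ v, 0 < t v := fun v => by rcases htv v with h | h <;> omega
  have hd : ∀ r, d ∉ influenced (pathGraph n) t lam S r := fun r hd =>
    (lt_and_le_add_of_mem_influenced_pathGraph ht hlam hiS hjsec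
      (fun x hix hxd => (hbetween x hix hxd).le) hid htd.ge hdS hlower r hd le_rfl).1.false
  exact ⟨hd, fun ⟨r, hr⟩ => hd r (hr ▸ mem_univ d)⟩
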